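/- Semantic dependency implies the reflexive-transitive closure of syntactic dependency: for any layered architecture configuration c and layers l, l' ∈ L, if l' semantically depends on l then (l, l') lies in the reflexive-transitive closure of the syntactic dependency relation of c. -/
import Mathlib


/-!  A formalization of the layered architecture model:
ports, services, valuations, layers, configurations, attachment closure,
configuration semantics, semantic update, syntactic and semantic dependency. -/

open Set

universe u v

/-- A valuation of a set of ports `P` assigns to each port `p ∈ P` a service in `ty p`. -/
def Val {Port : Type u} {Service : Type v} (ty : Port → Set Service) (P : Set Port) :
    Type (max u v) :=
  ∀ p, p ∈ P → ty p

/-- Restriction of a valuation to a smaller port set. -/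
def Val.restrict {Port : Type u} {Service : Type v} {ty : Port → Set Service}
    {P Q : Set Port} (h : Q ⊆ P) (ν : Val ty P) : Val ty Q :=
  fun p hp => ν p (h hp)

/-- Pointwise agreement of valuations of (possibly different) port sets. -/
def ValEq {Port : Type u} {Service : Type v} {ty : Port → Set Service}
    {P Q : Set Port} (μ : Val ty P) (μ' : Val ty Q) : Prop :=
  ∀ p (h : p ∈ P) (h' : p ∈ Q), (μ p h : Service) = (μ' p h' : Service)

/-- A layer: input ports, output ports and a (nondeterministic) behavior function. -/
structure Layer (Port : Type u) (Service : Type v) (ty : Port → Set Service) where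
  I : Set Port
  O : Set Port
  f : Val ty I → Set (Val ty O)

variable {Port : Type u} {Service : Type v} {ty : Port → Set Service}

/-- All ports of a layer. -/
def Layer.ports (l : Layer Port Service ty) : Set Port := l.I ∪ l.O

/-- Semantic update of a layer: replace its behavior function. -/
def Layer.update (l : Layer Port Service ty) (f : Val ty l.I → Set (Val ty l.O)) :
    Layer Port Service ty := ⟨l.I, l.O, f⟩

/-- The raw data of a layered architecture configuration: a set of layers and an
attachment (a partial map from ports to ports, `A i = some o` meaning input port `i`
is attached to output port `o`). -/
structure Config (Port : Type u) (Service : Type v) (ty : Port → Set Service) where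
  L : Set (Layer Port Service ty)
  A : Port → Option Port

/-- All input ports occurring in the configuration. -/
def Config.inPorts (c : Config Port Service ty) : Set Port := ⋃ l ∈ c.L, l.I

/-- All output ports occurring in the configuration. -/
def Config.outPorts (c : Config Port Service ty) : Set Port := ⋃ l ∈ c.L, l.O

/-- All ports occurring in the configuration. -/
def Config.ports (c : Config Port Service ty) : Set Port := ⋃ l ∈ c.L, l.ports

/-- The open input ports: input ports not attached. -/
def Config.openIn (c : Config Port Service ty) : Set Port :=
  c.inPorts \ {p | (c.A p).isSome}

/-- The axioms of a layered architecture configuration, relative to a global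
partition of the ports into input ports `Inp` and output ports `Outp`. -/
structure IsLAC (Inp Outp : Set Port) (c : Config Port Service ty) : Prop where
  io_disj : Disjoint Inp Outp
  inputs : ∀ l ∈ c.L, l.I ⊆ Inp
  outputs : ∀ l ∈ c.L, l.O ⊆ Outp
  ports_disj : ∀ k ∈ c.L, ∀ l ∈ c.L, k = l ∨ Disjoint k.ports l.ports
  domA : ∀ i o, c.A i = some o → i ∈ c.inPorts ∧ o ∈ c.outPorts
  compat : ∀ i o, c.A i = some o → ty o ⊆ ty i

instance : Nonempty (Layer Port Service ty) := ⟨⟨∅, ∅, fun _ => ∅⟩⟩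

/-- The layer owning a port (unique in a configuration by port-disjointness). -/
noncomputable def Config.proj (c : Config Port Service ty) (p : Port) :
    Layer Port Service ty :=
  Classical.epsilon fun l => l ∈ c.L ∧ p ∈ l.ports

/-- The attachment closure `out(l)*`: the least set of ports of `c` containing `out(l)`,
closed under the attachment and under adding all input ports of any layer owning an
output port in the set. -/
def Config.star (c : Config Port Service ty) (l : Layer Port Service ty) : Set Port :=
  ⋂₀ {P | P ⊆ c.ports ∧ l.O ⊆ P ∧
      (∀ i o, c.A i = some o → i ∈ P → o ∈ P) ∧
      (∀ o, o ∈ c.outPorts → o ∈ P → (c.proj o).I ⊆ P)}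

/-- `ν` is a consistent valuation of the attachment closure `out(l)*` for the
open-input valuation `μ`. -/
def Config.witness (c : Config Port Service ty) (l : Layer Port Service ty)
    (μ : Val ty c.openIn) (ν : Val ty (c.star l)) : Prop :=
  (∀ p (h1 : p ∈ c.openIn) (h2 : p ∈ c.star l),
      (μ p h1 : Service) = (ν p h2 : Service)) ∧
  (∀ i o, c.A i = some o → ∀ (hi : i ∈ c.star l) (ho : o ∈ c.star l),
      (ν i hi : Service) = (ν o ho : Service)) ∧
  (∀ o, o ∈ c.star l → o ∈ c.outPorts →
      ∃ (hI : (c.proj o).I ⊆ c.star l) (ξ : Val ty (c.proj o).O),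
        ξ ∈ (c.proj o).f (Val.restrict hI ν) ∧
        ∀ p (h1 : p ∈ (c.proj o).O) (h2 : p ∈ c.star l),
          (ξ p h1 : Service) = (ν p h2 : Service))

/-- Configuration semantics of layer `l` in configuration `c`. -/
noncomputable def Config.sem (c : Config Port Service ty) (l : Layer Port Service ty)
    (μ : Val ty c.openIn) : Set (Val ty l.O) :=
  {κ | ∃ (ν : Val ty (c.star l)) (hO : l.O ⊆ c.star l),
      κ = Val.restrict hO ν ∧ c.witness l μ ν}

/-- Semantic update of a configuration: replace the behavior function of layer `l`. -/
def Config.update (c : Config Port Service ty) (l : Layer Port Service ty)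
    (f : Val ty l.I → Set (Val ty l.O)) : Config Port Service ty :=
  ⟨(c.L \ {l}) ∪ {l.update f}, c.A⟩

/-- Syntactic dependency: `l'` syntactically depends on `l`. -/
def Config.syndep (c : Config Port Service ty) (l l' : Layer Port Service ty) : Prop :=
  ∃ o ∈ l.O, ∃ i ∈ l'.I, c.A i = some o

open scoped Classical in
/-- Semantic dependency: `l'` semantically depends on `l`, i.e. some behavior update
of `l` changes the configuration semantics of `l'` (of the updated layer if `l = l'`). -/
noncomputable def Config.semdep (c : Config Port Service ty)
    (l l' : Layer Port Service ty) : Prop :=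
  if l = l' then
    ∃ (f : Val ty l.I → Set (Val ty l.O)) (μ : Val ty c.openIn)
      (μ' : Val ty (c.update l f).openIn),
      ValEq μ μ' ∧ c.sem l μ ≠ (c.update l f).sem (l.update f) μ'
  else
    ∃ (f : Val ty l.I → Set (Val ty l.O)) (μ : Val ty c.openIn)
      (μ' : Val ty (c.update l f).openIn),
      ValEq μ μ' ∧ c.sem l' μ ≠ (c.update l f).sem l' μ'

/-- A configuration is usable iff some valuation of the open input ports makes the
configuration semantics of every layer nonempty. -/
def Config.usable (c : Config Port Service ty) : Prop :=
  ∃ μ : Val ty c.openIn, ∀ l ∈ c.L, c.sem l μ ≠ ∅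

variable {Inp Outp : Set Port}

section Aux

variable (c : Config Port Service ty)

/-- Uniqueness of the owning layer: `proj` is correct. -/
lemma proj_eq (hc : IsLAC Inp Outp c) {k : Layer Port Service ty} (hk : k ∈ c.L)
    {p : Port} (hp : p ∈ k.ports) : c.proj p = k := by
  obtain ⟨hm, hpm⟩ :=
    Classical.epsilon_spec (p := fun m => m ∈ c.L ∧ p ∈ m.ports) ⟨k, hk, hp⟩
  rcases hc.ports_disj _ hm _ hk with h | h
  · exact h
  · exact absurd hp (Set.disjoint_left.mp h hpm)

lemma mem_update_L {l : Layer Port Service ty} {f : Val ty l.I → Set (Val ty l.O)}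
    {m : Layer Port Service ty} :
    m ∈ (c.update l f).L ↔ (m ∈ c.L ∧ m ≠ l) ∨ m = l.update f := by
  rw [show (c.update l f).L = (c.L \ {l}) ∪ {l.update f} from rfl]
  simp only [Set.mem_union, Set.mem_diff, Set.mem_singleton_iff]

lemma update_inPorts {l : Layer Port Service ty} (hl : l ∈ c.L)
    (f : Val ty l.I → Set (Val ty l.O)) :
    (c.update l f).inPorts = c.inPorts := by
  ext p
  simp only [Config.inPorts, Set.mem_iUnion, exists_prop]
  constructor
  · rintro ⟨m, hm, hp⟩
    rcases (mem_update_L c).mp hm with ⟨hm, _⟩ | rfl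
    · exact ⟨m, hm, hp⟩
    · exact ⟨l, hl, hp⟩
  · rintro ⟨m, hm, hp⟩
    by_cases h : m = l
    · exact ⟨l.update f, (mem_update_L c).mpr (Or.inr rfl), by subst h; exact hp⟩
    · exact ⟨m, (mem_update_L c).mpr (Or.inl ⟨hm, h⟩), hp⟩

lemma update_outPorts {l : Layer Port Service ty} (hl : l ∈ c.L)
    (f : Val ty l.I → Set (Val ty l.O)) :
    (c.update l f).outPorts = c.outPorts := by
  ext p
  simp only [Config.outPorts, Set.mem_iUnion, exists_prop]
  constructor
  · rintro ⟨m, hm, hp⟩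
    rcases (mem_update_L c).mp hm with ⟨hm, _⟩ | rfl
    · exact ⟨m, hm, hp⟩
    · exact ⟨l, hl, hp⟩
  · rintro ⟨m, hm, hp⟩
    by_cases h : m = l
    · exact ⟨l.update f, (mem_update_L c).mpr (Or.inr rfl), by subst h; exact hp⟩
    · exact ⟨m, (mem_update_L c).mpr (Or.inl ⟨hm, h⟩), hp⟩

lemma update_ports {l : Layer Port Service ty} (hl : l ∈ c.L)
    (f : Val ty l.I → Set (Val ty l.O)) :
    (c.update l f).ports = c.ports := by
  ext p
  simp only [Config.ports, Set.mem_iUnion, exists_prop]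
  constructor
  · rintro ⟨m, hm, hp⟩
    rcases (mem_update_L c).mp hm with ⟨hm, _⟩ | rfl
    · exact ⟨m, hm, hp⟩
    · exact ⟨l, hl, hp⟩
  · rintro ⟨m, hm, hp⟩
    by_cases h : m = l
    · exact ⟨l.update f, (mem_update_L c).mpr (Or.inr rfl), by subst h; exact hp⟩
    · exact ⟨m, (mem_update_L c).mpr (Or.inl ⟨hm, h⟩), hp⟩

lemma update_openIn {l : Layer Port Service ty} (hl : l ∈ c.L)
    (f : Val ty l.I → Set (Val ty l.O)) :
    (c.update l f).openIn = c.openIn := by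
  unfold Config.openIn
  rw [update_inPorts c hl f]
  rfl

lemma update_isLAC (hc : IsLAC Inp Outp c) {l : Layer Port Service ty} (hl : l ∈ c.L)
    (f : Val ty l.I → Set (Val ty l.O)) : IsLAC Inp Outp (c.update l f) := by
  constructor
  · exact hc.io_disj
  · intro m hm
    rcases (mem_update_L c).mp hm with ⟨hm, _⟩ | rfl
    · exact hc.inputs m hm
    · exact hc.inputs l hl
  · intro m hm
    rcases (mem_update_L c).mp hm with ⟨hm, _⟩ | rfl
    · exact hc.outputs m hm
    · exact hc.outputs l hl
  · intro k hk m hm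
    rcases (mem_update_L c).mp hk with ⟨hk, hkl⟩ | rfl <;>
      rcases (mem_update_L c).mp hm with ⟨hm, hml⟩ | rfl
    · exact hc.ports_disj k hk m hm
    · rcases hc.ports_disj k hk l hl with h | h
      · exact absurd h hkl
      · exact Or.inr h
    · rcases hc.ports_disj l hl m hm with h | h
      · exact absurd h.symm hml
      · exact Or.inr h
    · exact Or.inl rfl
  · intro i o hA
    rw [update_inPorts c hl f, update_outPorts c hl f]
    exact hc.domA i o hA
  · intro i o hA
    exact hc.compat i o hA

/-- Basic facts about the attachment closure. -/
lemma O_subset_star (l' : Layer Port Service ty) : l'.O ⊆ c.star l' :=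
  Set.subset_sInter fun _ hP => hP.2.1

lemma star_attach (l' : Layer Port Service ty) {i o : Port} (hA : c.A i = some o)
    (hi : i ∈ c.star l') : o ∈ c.star l' :=
  Set.mem_sInter.mpr fun P hP => hP.2.2.1 i o hA (Set.mem_sInter.mp hi P hP)

lemma star_proj (l' : Layer Port Service ty) {o : Port} (ho : o ∈ c.outPorts)
    (hos : o ∈ c.star l') : (c.proj o).I ⊆ c.star l' :=
  fun p hp => Set.mem_sInter.mpr fun P hP =>
    hP.2.2.2 o ho (Set.mem_sInter.mp hos P hP) hp

lemma star_le (l' : Layer Port Service ty) {P : Set Port}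
    (hP : P ⊆ c.ports ∧ l'.O ⊆ P ∧
      (∀ i o, c.A i = some o → i ∈ P → o ∈ P) ∧
      (∀ o, o ∈ c.outPorts → o ∈ P → (c.proj o).I ⊆ P)) :
    c.star l' ⊆ P :=
  Set.sInter_subset_of_mem hP

end Aux

section Core

variable (c : Config Port Service ty)

lemma owner_unique (hc : IsLAC Inp Outp c) {k m : Layer Port Service ty}
    (hk : k ∈ c.L) (hm : m ∈ c.L) {p : Port} (hpk : p ∈ k.ports) (hpm : p ∈ m.ports) :
    k = m := by
  rcases hc.ports_disj k hk m hm with h | h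
  · exact h
  · exact absurd hpm (Set.disjoint_left.mp h hpk)

/-- The ports of layers on which `l'` (reflexively-transitively) syntactically depends. -/
def depPorts (l' : Layer Port Service ty) : Set Port :=
  {p | ∃ k, k ∈ c.L ∧ Relation.ReflTransGen c.syndep k l' ∧ p ∈ k.ports}

lemma depPorts_subset_ports (l' : Layer Port Service ty) :
    depPorts c l' ⊆ c.ports := by
  rintro p ⟨k, hk, _, hpk⟩
  simp only [Config.ports, Set.mem_iUnion, exists_prop]
  exact ⟨k, hk, hpk⟩

lemma depPorts_attach (hc : IsLAC Inp Outp c) (l' : Layer Port Service ty) :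
    ∀ i o, c.A i = some o → i ∈ depPorts c l' → o ∈ depPorts c l' := by
  rintro i o hA ⟨k, hk, hrtg, hik⟩
  obtain ⟨hiIn, hoOut⟩ := hc.domA i o hA
  simp only [Config.inPorts, Set.mem_iUnion, exists_prop] at hiIn
  obtain ⟨m, hm, hiI⟩ := hiIn
  have hmk : m = k := owner_unique c hc hm hk (Or.inl hiI) hik
  simp only [Config.outPorts, Set.mem_iUnion, exists_prop] at hoOut
  obtain ⟨n, hn, hoO⟩ := hoOut
  exact ⟨n, hn, Relation.ReflTransGen.head ⟨o, hoO, i, hmk ▸ hiI, hA⟩ hrtg,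
    Or.inr hoO⟩

/-- `depPorts` is a member of the family defining `c.star l'`. -/
lemma star_subset_depPorts (hc : IsLAC Inp Outp c) {l' : Layer Port Service ty}
    (hl' : l' ∈ c.L) : c.star l' ⊆ depPorts c l' := by
  apply star_le
  refine ⟨depPorts_subset_ports c l',
    fun p hp => ⟨l', hl', Relation.ReflTransGen.refl, Or.inr hp⟩,
    depPorts_attach c hc l', ?_⟩
  rintro o _ ⟨k, hk, hrtg, hok⟩ p hp
  rw [proj_eq c hc hk hok] at hp
  exact ⟨k, hk, hrtg, Or.inl hp⟩

variable {l : Layer Port Service ty}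

lemma star_update_subset_depPorts (hc : IsLAC Inp Outp c) (hl : l ∈ c.L)
    {l' : Layer Port Service ty} (hl' : l' ∈ c.L)
    (hn : ¬ Relation.ReflTransGen c.syndep l l')
    (f : Val ty l.I → Set (Val ty l.O)) :
    (c.update l f).star l' ⊆ depPorts c l' := by
  apply star_le
  refine ⟨?_, fun p hp => ⟨l', hl', Relation.ReflTransGen.refl, Or.inr hp⟩, ?_, ?_⟩
  · rw [update_ports c hl f]
    exact depPorts_subset_ports c l'
  · exact depPorts_attach c hc l'
  · rintro o _ ⟨k, hk, hrtg, hok⟩ p hp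
    have hkl : k ≠ l := fun h => hn (h ▸ hrtg)
    rw [proj_eq _ (update_isLAC c hc hl f)
      ((mem_update_L c).mpr (Or.inl ⟨hk, hkl⟩)) hok] at hp
    exact ⟨k, hk, hrtg, Or.inl hp⟩

/-- `proj` agrees on the dependency ports. -/
lemma proj_update_eq (hc : IsLAC Inp Outp c) (hl : l ∈ c.L)
    {l' : Layer Port Service ty}
    (hn : ¬ Relation.ReflTransGen c.syndep l l')
    (f : Val ty l.I → Set (Val ty l.O)) {o : Port} (ho : o ∈ depPorts c l') :
    (c.update l f).proj o = c.proj o := by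
  obtain ⟨k, hk, hrtg, hok⟩ := ho
  have hkl : k ≠ l := fun h => hn (h ▸ hrtg)
  rw [proj_eq c hc hk hok,
    proj_eq _ (update_isLAC c hc hl f) ((mem_update_L c).mpr (Or.inl ⟨hk, hkl⟩)) hok]

/-- Updating an unrelated layer does not change the attachment closure. -/
lemma star_update_eq (hc : IsLAC Inp Outp c) (hl : l ∈ c.L)
    {l' : Layer Port Service ty} (hl' : l' ∈ c.L)
    (hn : ¬ Relation.ReflTransGen c.syndep l l')
    (f : Val ty l.I → Set (Val ty l.O)) :
    (c.update l f).star l' = c.star l' := by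
  have hsub : c.star l' ⊆ depPorts c l' := star_subset_depPorts c hc hl'
  have hsub' : (c.update l f).star l' ⊆ depPorts c l' :=
    star_update_subset_depPorts c hc hl hl' hn f
  apply Set.Subset.antisymm
  · -- (c.update l f).star l' ⊆ c.star l'
    apply star_le
    refine ⟨?_, O_subset_star c l', fun i o hA hi => star_attach c l' hA hi, ?_⟩
    · rw [update_ports c hl f]
      exact (hsub.trans (depPorts_subset_ports c l'))
    · intro o hoOut hoS
      rw [update_outPorts c hl f] at hoOut
      rw [proj_update_eq c hc hl hn f (hsub hoS)]
      exact star_proj c l' hoOut hoS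
  · -- c.star l' ⊆ (c.update l f).star l'
    apply star_le
    refine ⟨?_, O_subset_star _ l',
      fun i o hA hi => star_attach _ l' hA hi, ?_⟩
    · exact hsub'.trans (depPorts_subset_ports c l')
    · intro o hoOut hoS
      rw [← proj_update_eq c hc hl hn f (hsub' hoS)]
      refine star_proj _ l' ?_ hoS
      rw [update_outPorts c hl f]
      exact hoOut

/-- Transport of the output-port witness condition along equalities of layers/sets. -/
lemma exists_xi_congr {k k' : Layer Port Service ty} (hk : k' = k)
    {S S' : Set Port} (hS : S' = S) (ν : Val ty S)
    (hI : k.I ⊆ S) (ξ : Val ty k.O) (hξ : ξ ∈ k.f (Val.restrict hI ν))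
    (hag : ∀ p (h1 : p ∈ k.O) (h2 : p ∈ S), (ξ p h1 : Service) = (ν p h2 : Service)) :
    ∃ (hI' : k'.I ⊆ S') (ξ' : Val ty k'.O),
      ξ' ∈ k'.f (Val.restrict hI' (fun p hp => ν p (hS ▸ hp))) ∧
      ∀ p (h1 : p ∈ k'.O) (h2 : p ∈ S'),
        (ξ' p h1 : Service) = (ν p (hS ▸ h2) : Service) := by
  subst hk; subst hS
  exact ⟨hI, ξ, hξ, hag⟩

/-- Updating an unrelated layer does not change the configuration semantics. -/
lemma sem_update_eq (hc : IsLAC Inp Outp c) (hl : l ∈ c.L)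
    {l' : Layer Port Service ty} (hl' : l' ∈ c.L)
    (hn : ¬ Relation.ReflTransGen c.syndep l l')
    (f : Val ty l.I → Set (Val ty l.O))
    (μ : Val ty c.openIn) (μ' : Val ty (c.update l f).openIn) (hμ : ValEq μ μ') :
    c.sem l' μ = (c.update l f).sem l' μ' := by
  have hstar := star_update_eq c hc hl hl' hn f
  have hopen := update_openIn c hl f
  have hout := update_outPorts c hl f
  have hsub : c.star l' ⊆ depPorts c l' := star_subset_depPorts c hc hl'
  ext κ
  simp only [Config.sem, Set.mem_setOf_eq]
  constructor
  · rintro ⟨ν, hO, hκ, hw1, hw2, hw3⟩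
    refine ⟨fun p hp => ν p (hstar ▸ hp), by rw [hstar]; exact hO, hκ, ?_, ?_, ?_⟩
    · intro p h1 h2
      have h1c : p ∈ c.openIn := by rw [← hopen]; exact h1
      rw [← hμ p h1c h1]
      exact hw1 p h1c (hstar ▸ h2)
    · intro i o hA hi ho
      exact hw2 i o hA (hstar ▸ hi) (hstar ▸ ho)
    · intro o ho hoOut
      have hoc : o ∈ c.star l' := hstar ▸ ho
      have hoOutc : o ∈ c.outPorts := by rw [← hout]; exact hoOut
      obtain ⟨hI, ξ, hξ, hag⟩ := hw3 o hoc hoOutc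
      exact exists_xi_congr (proj_update_eq c hc hl hn f (hsub hoc)) hstar ν hI ξ hξ hag
  · rintro ⟨ν, hO, hκ, hw1, hw2, hw3⟩
    refine ⟨fun p hp => ν p (hstar.symm ▸ hp), O_subset_star c l', hκ, ?_, ?_, ?_⟩
    · intro p h1 h2
      have h1c : p ∈ (c.update l f).openIn := by rw [hopen]; exact h1
      rw [hμ p h1 h1c]
      exact hw1 p h1c (hstar.symm ▸ h2)
    · intro i o hA hi ho
      exact hw2 i o hA (hstar.symm ▸ hi) (hstar.symm ▸ ho)
    · intro o ho hoOut
      have hoc : o ∈ (c.update l f).star l' := hstar.symm ▸ ho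
      have hoOutc : o ∈ (c.update l f).outPorts := by rw [hout]; exact hoOut
      obtain ⟨hI, ξ, hξ, hag⟩ := hw3 o hoc hoOutc
      exact exists_xi_congr (proj_update_eq c hc hl hn f (hsub ho)).symm hstar.symm
        ν hI ξ hξ hag

end Core

/-- semantic dependency implies the reflexive-transitive closure of
syntactic dependency. -/
theorem semdep_subset_syndep_rt (c : Config Port Service ty) (hc : IsLAC Inp Outp c)
    (l l' : Layer Port Service ty) (hl : l ∈ c.L) (hl' : l' ∈ c.L)
    (h : c.semdep l l') :
    Relation.ReflTransGen c.syndep l l' := by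
  by_cases hll : l = l'
  · subst hll
    exact Relation.ReflTransGen.refl
  · by_contra hn
    unfold Config.semdep at h
    rw [if_neg hll] at h
    obtain ⟨f, μ, μ', hμ, hne⟩ := h
    exact hne (sem_update_eq c hc hl hl' hn f μ μ' hμ)
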